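/- arXiv:2012.01089 — 4 statements merged into one kernel-verified Lean document; each statement's English description precedes it below -/
import Mathlib

section
/- Let s > 0, ω > 0, K_x ≥ 0, K_y ≥ 0, and let x, v ∈ B_s^d with x ≠ 0, d_s(0, x) ≤ K_x and d_s(0, v) ≤ K_y. Let P be a real d×d matrix with Px ≠ 0 and ‖P‖_F ≤ K_y/ω. Then d_s(v, P^{⊗_s} x) ≤ K_y·(K_x/ω + 1). -/
open Real MeasureTheory

/-- Inverse hyperbolic tangent on `(-1, 1)`. -/
noncomputable def Real.artanhLog (x : ℝ) : ℝ := (1 / 2) * Real.log ((1 + x) / (1 - x))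

/-- Matrix-vector multiplication viewed as a map between Euclidean spaces. -/
noncomputable def mulVecE {d d' : ℕ} (P : Matrix (Fin d') (Fin d) ℝ)
    (x : EuclideanSpace ℝ (Fin d)) : EuclideanSpace ℝ (Fin d') :=
  (EuclideanSpace.equiv (Fin d') ℝ).symm (P.mulVec (EuclideanSpace.equiv (Fin d) ℝ x))

/-- Möbius matrix multiplication `P^{⊗_s} x` on the Poincaré ball of radius `s`.
When `P.mulVec x = 0` this evaluates to `0`, as required. -/
noncomputable def mobiusMat {d d' : ℕ} (s : ℝ) (P : Matrix (Fin d') (Fin d) ℝ)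
    (x : EuclideanSpace ℝ (Fin d)) : EuclideanSpace ℝ (Fin d') :=
  (s * Real.tanh ((‖mulVecE P x‖ / ‖x‖) * Real.artanhLog (‖x‖ / s)) / ‖mulVecE P x‖) • mulVecE P x

/-- Frobenius norm of a real matrix. -/
noncomputable def frobNorm {m n : ℕ} (P : Matrix (Fin m) (Fin n) ℝ) : ℝ :=
  Real.sqrt (∑ i, ∑ j, (P i j) ^ 2)

/-- Lorentz gamma factor `γ_x = 1/√(1 - ‖x‖²/s²)`. -/
noncomputable def lorentzGamma {d : ℕ} (s : ℝ) (x : EuclideanSpace ℝ (Fin d)) : ℝ :=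
  1 / Real.sqrt (1 - ‖x‖ ^ 2 / s ^ 2)

/-- Poincaré distance `d_s(x,y) = 2s·arsinh(γ_x γ_y ‖x - y‖ / s)`. -/
noncomputable def dPoin {d : ℕ} (s : ℝ) (x y : EuclideanSpace ℝ (Fin d)) : ℝ :=
  2 * s * Real.arsinh (lorentzGamma s x * lorentzGamma s y * ‖x - y‖ / s)

/-- Möbius addition on the Poincaré ball of radius `s`. -/
noncomputable def mobiusAdd {d : ℕ} (s : ℝ) (x y : EuclideanSpace ℝ (Fin d)) :
    EuclideanSpace ℝ (Fin d) :=
  ((1 + 2 / s ^ 2 * (inner ℝ x y : ℝ) + 1 / s ^ 2 * ‖y‖ ^ 2) /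
      (1 + 2 / s ^ 2 * (inner ℝ x y : ℝ) + 1 / s ^ 4 * ‖x‖ ^ 2 * ‖y‖ ^ 2)) • x +
    ((1 - 1 / s ^ 2 * ‖x‖ ^ 2) /
      (1 + 2 / s ^ 2 * (inner ℝ x y : ℝ) + 1 / s ^ 4 * ‖x‖ ^ 2 * ‖y‖ ^ 2)) • y

/-- Exponential map at the origin of the Poincaré ball of radius `s`. -/
noncomputable def expZero {d : ℕ} (s : ℝ) (v : EuclideanSpace ℝ (Fin d)) :
    EuclideanSpace ℝ (Fin d) :=
  (s * Real.tanh (‖v‖ / s) / ‖v‖) • v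

/-- Logarithmic map at the origin of the Poincaré ball of radius `s`. -/
noncomputable def logZero {d : ℕ} (s : ℝ) (y : EuclideanSpace ℝ (Fin d)) :
    EuclideanSpace ℝ (Fin d) :=
  (s * Real.artanhLog (‖y‖ / s) / ‖y‖) • y

/-!
With `a = artanh (‖v‖ / s)` and `b = artanh (‖w‖ / s)` one has `γ_v = cosh a` and
`γ_v ‖v‖ / s = sinh a`, so `d_s(0, v) = 2 s a` and, bounding `‖v - w‖ ≤ ‖v‖ + ‖w‖`,
`γ_v γ_w ‖v - w‖ / s ≤ sinh a cosh b + cosh a sinh b = sinh (a + b)`; this is the triangle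
inequality `d_s(v, w) ≤ d_s(0, v) + d_s(0, w)` through the origin. Möbius matrix multiplication
multiplies `artanh (‖x‖ / s)`, hence `d_s(0, x)`, by `‖P x‖ / ‖x‖ ≤ ‖P‖_F ≤ K_y / ω`.
-/

open Set

namespace Real

theorem artanhLog_eq_artanh {x : ℝ} (hx : x ∈ Icc (-1) 1) : artanhLog x = artanh x :=
  (artanh_eq_half_log hx).symm

theorem tanh_nonneg {x : ℝ} (hx : 0 ≤ x) : 0 ≤ tanh x := by
  rw [tanh_eq_sinh_div_cosh]
  exact div_nonneg (sinh_nonneg_iff.2 hx) (cosh_pos x).le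

end Real

theorem norm_div_mem_Ioo {E : Type*} [SeminormedAddCommGroup E] {v : E} {s : ℝ} (hv : ‖v‖ < s) :
    ‖v‖ / s ∈ Ioo (-1) 1 := by
  have hs : 0 < s := (norm_nonneg v).trans_lt hv
  exact ⟨by linarith [div_nonneg (norm_nonneg v) hs.le], (div_lt_one hs).2 hv⟩

section Frobenius

attribute [local instance] Matrix.frobeniusSeminormedAddCommGroup

theorem frobNorm_eq_norm {m n : ℕ} (P : Matrix (Fin m) (Fin n) ℝ) : frobNorm P = ‖P‖ := by
  rw [frobNorm, Matrix.frobenius_norm_def, Real.sqrt_eq_rpow]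
  simp [Real.norm_eq_abs, sq_abs]

theorem frobNorm_nonneg {m n : ℕ} (P : Matrix (Fin m) (Fin n) ℝ) : 0 ≤ frobNorm P :=
  Real.sqrt_nonneg _

theorem norm_mulVecE_le {d d' : ℕ} (P : Matrix (Fin d') (Fin d) ℝ) (x : EuclideanSpace ℝ (Fin d)) :
    ‖mulVecE P x‖ ≤ frobNorm P * ‖x‖ := by
  calc ‖mulVecE P x‖ = ‖Matrix.replicateCol (Fin 1) (P.mulVec (WithLp.ofLp x))‖ :=
        (Matrix.frobenius_norm_replicateCol _).symm
    _ ≤ ‖P‖ * ‖Matrix.replicateCol (Fin 1) (WithLp.ofLp x)‖ := by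
        rw [Matrix.replicateCol_mulVec]
        exact Matrix.frobenius_norm_mul _ _
    _ = frobNorm P * ‖x‖ := by
        rw [frobNorm_eq_norm]
        exact congrArg (‖P‖ * ·) (Matrix.frobenius_norm_replicateCol _)

end Frobenius

section PoincareBall

variable {d : ℕ} {s : ℝ}

theorem lorentzGamma_eq_cosh {v : EuclideanSpace ℝ (Fin d)} (hv : ‖v‖ < s) :
    lorentzGamma s v = cosh (artanh (‖v‖ / s)) := by
  rw [cosh_artanh (norm_div_mem_Ioo hv), lorentzGamma, div_pow]

theorem lorentzGamma_mul_norm_div_eq_sinh {v : EuclideanSpace ℝ (Fin d)} (hv : ‖v‖ < s) :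
    lorentzGamma s v * (‖v‖ / s) = sinh (artanh (‖v‖ / s)) := by
  rw [sinh_artanh (norm_div_mem_Ioo hv), lorentzGamma, div_pow]
  ring

theorem dPoin_zero_left {v : EuclideanSpace ℝ (Fin d)} (hv : ‖v‖ < s) :
    dPoin s 0 v = 2 * s * artanh (‖v‖ / s) := by
  have hγ : lorentzGamma s (0 : EuclideanSpace ℝ (Fin d)) = 1 := by simp [lorentzGamma]
  rw [dPoin, hγ, zero_sub, norm_neg, one_mul, mul_div_assoc,
    lorentzGamma_mul_norm_div_eq_sinh hv, arsinh_sinh]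

theorem dPoin_zero_left_nonneg {v : EuclideanSpace ℝ (Fin d)} (hv : ‖v‖ < s) :
    0 ≤ dPoin s 0 v := by
  have hs : 0 < s := (norm_nonneg v).trans_lt hv
  rw [dPoin_zero_left hv]
  exact mul_nonneg (by positivity) (artanh_nonneg (by positivity))

theorem dPoin_le_dPoin_zero_add {v w : EuclideanSpace ℝ (Fin d)} (hv : ‖v‖ < s) (hw : ‖w‖ < s) :
    dPoin s v w ≤ dPoin s 0 v + dPoin s 0 w := by
  have hs : 0 < s := (norm_nonneg v).trans_lt hv
  set a := artanh (‖v‖ / s)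
  set b := artanh (‖w‖ / s)
  have hγ : 0 ≤ lorentzGamma s v * lorentzGamma s w := by
    rw [lorentzGamma_eq_cosh hv, lorentzGamma_eq_cosh hw]
    exact mul_nonneg (cosh_pos a).le (cosh_pos b).le
  have hsinh : lorentzGamma s v * lorentzGamma s w * ‖v - w‖ / s ≤ sinh (a + b) :=
    calc lorentzGamma s v * lorentzGamma s w * ‖v - w‖ / s
        ≤ lorentzGamma s v * lorentzGamma s w * ((‖v‖ + ‖w‖) / s) := by
          rw [mul_div_assoc]; gcongr; exact norm_sub_le v w
      _ = lorentzGamma s v * (‖v‖ / s) * lorentzGamma s w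
          + lorentzGamma s v * (lorentzGamma s w * (‖w‖ / s)) := by ring
      _ = sinh (a + b) := by
          rw [lorentzGamma_mul_norm_div_eq_sinh hv, lorentzGamma_mul_norm_div_eq_sinh hw,
            lorentzGamma_eq_cosh hv, lorentzGamma_eq_cosh hw, sinh_add]
  rw [dPoin, dPoin_zero_left hv, dPoin_zero_left hw, ← mul_add]
  gcongr
  rw [← arsinh_sinh (a + b)]
  exact arsinh_le_arsinh.2 hsinh

end PoincareBall

section MobiusMat

variable {d d' : ℕ} {s : ℝ} (P : Matrix (Fin d') (Fin d) ℝ) {x : EuclideanSpace ℝ (Fin d)}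

theorem norm_mobiusMat (hPx : mulVecE P x ≠ 0) :
    ‖mobiusMat s P x‖ = |s * tanh (‖mulVecE P x‖ / ‖x‖ * artanhLog (‖x‖ / s))| := by
  rw [mobiusMat, norm_smul, norm_div, norm_norm, Real.norm_eq_abs,
    div_mul_cancel₀ _ (norm_ne_zero_iff.2 hPx)]

theorem norm_mobiusMat_lt (hs : 0 < s) : ‖mobiusMat s P x‖ < s := by
  by_cases hPx : mulVecE P x = 0
  · simpa [mobiusMat, hPx] using hs
  rw [norm_mobiusMat P hPx, abs_mul, abs_of_pos hs]
  exact mul_lt_of_lt_one_right hs (abs_tanh_lt_one _)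

theorem dPoin_zero_mobiusMat (hx : ‖x‖ < s) :
    dPoin s 0 (mobiusMat s P x) = ‖mulVecE P x‖ / ‖x‖ * dPoin s 0 x := by
  by_cases hPx : mulVecE P x = 0
  · simp [mobiusMat, hPx, dPoin]
  have hs : 0 < s := (norm_nonneg x).trans_lt hx
  have hart : artanhLog (‖x‖ / s) = artanh (‖x‖ / s) :=
    artanhLog_eq_artanh (Ioo_subset_Icc_self (norm_div_mem_Ioo hx))
  set θ := ‖mulVecE P x‖ / ‖x‖ * artanh (‖x‖ / s)
  have hθ : 0 ≤ θ := mul_nonneg (by positivity) (artanh_nonneg (by positivity))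
  have hnorm : ‖mobiusMat s P x‖ / s = tanh θ := by
    rw [norm_mobiusMat P hPx, hart, abs_of_nonneg (mul_nonneg hs.le (tanh_nonneg hθ))]
    field_simp
  rw [dPoin_zero_left (norm_mobiusMat_lt P hs), hnorm, artanh_tanh, dPoin_zero_left hx]
  ring

end MobiusMat

theorem stmt4_general {d : ℕ} (s ω Kx Ky : ℝ)
    (x v : EuclideanSpace ℝ (Fin d)) (hxball : ‖x‖ < s) (hvball : ‖v‖ < s)
    (hdx : dPoin s 0 x ≤ Kx) (hdv : dPoin s 0 v ≤ Ky)
    (P : Matrix (Fin d) (Fin d) ℝ) (hPF : frobNorm P ≤ Ky / ω) :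
    dPoin s v (mobiusMat s P x) ≤ Ky * (Kx / ω + 1) := by
  have hs : 0 < s := (norm_nonneg x).trans_lt hxball
  have hratio : ‖mulVecE P x‖ / ‖x‖ ≤ Ky / ω :=
    (div_le_of_le_mul₀ (norm_nonneg x) (frobNorm_nonneg P) (norm_mulVecE_le P x)).trans hPF
  calc dPoin s v (mobiusMat s P x) ≤ dPoin s 0 v + dPoin s 0 (mobiusMat s P x) :=
        dPoin_le_dPoin_zero_add hvball (norm_mobiusMat_lt P hs)
    _ = dPoin s 0 v + ‖mulVecE P x‖ / ‖x‖ * dPoin s 0 x := by rw [dPoin_zero_mobiusMat P hxball]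
    _ ≤ Ky + Ky / ω * Kx :=
        add_le_add hdv (mul_le_mul hratio hdx (dPoin_zero_left_nonneg hxball)
          ((frobNorm_nonneg P).trans hPF))
    _ = Ky * (Kx / ω + 1) := by ring

/-- The hyperbolic loss is bounded: `d_s(v, P^{⊗_s} x) ≤ K_y·(K_x/ω + 1)`. -/
theorem stmt4 {d : ℕ} (s ω Kx Ky : ℝ) (hs : 0 < s) (hω : 0 < ω) (hKx : 0 ≤ Kx) (hKy : 0 ≤ Ky)
    (x v : EuclideanSpace ℝ (Fin d)) (hx0 : x ≠ 0) (hxball : ‖x‖ < s) (hvball : ‖v‖ < s)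
    (hdx : dPoin s 0 x ≤ Kx) (hdv : dPoin s 0 v ≤ Ky)
    (P : Matrix (Fin d) (Fin d) ℝ) (hPx : mulVecE P x ≠ 0) (hPF : frobNorm P ≤ Ky / ω) :
    dPoin s v (mobiusMat s P x) ≤ Ky * (Kx / ω + 1) :=
  stmt4_general s ω Kx Ky x v hxball hvball hdx hdv P hPF
end

section
/- Let x, y ∈ ℝ^d be fixed. Then the Poincaré distance d_s(x, y) = 2s·artanh(‖(−x) ⊕_s y‖/s) tends to 2‖x − y‖ as s → ∞ (the expression being defined for all s > max(‖x‖, ‖y‖)). -/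
open Real MeasureTheory

/-! As `s → ∞` the Möbius sum `(-x) ⊕_s y` tends to `y - x`. The elementary bounds
`u / (1 + u) ≤ artanh u ≤ u / (1 - u)` then squeeze
`s · artanh(n / s)` to `lim n` whenever `n` converges. -/

open Filter Topology

namespace Real

theorem artanhLog_mem_Icc {u : ℝ} (h₁ : -1 < u) (h₂ : u < 1) :
    artanhLog u ∈ Set.Icc (u / (1 + u)) (u / (1 - u)) := by
  have hp : 0 < 1 + u := by linarith
  have hm : 0 < 1 - u := by linarith
  have hq : 0 < (1 + u) / (1 - u) := div_pos hp hm
  -- `log t ≤ t - 1` at `t = (1+u)/(1-u)` and at its inverse.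
  have hup := log_le_sub_one_of_pos hq
  have hlow := log_le_sub_one_of_pos (inv_pos.2 hq)
  rw [log_inv, inv_div] at hlow
  have e₁ : (1 + u) / (1 - u) - 1 = 2 * (u / (1 - u)) := by field_simp; ring
  have e₂ : (1 - u) / (1 + u) - 1 = -(2 * (u / (1 + u))) := by field_simp; ring
  rw [e₁] at hup
  rw [e₂] at hlow
  unfold artanhLog
  constructor <;> linarith

theorem tendsto_mul_artanhLog_div {n : ℝ → ℝ} {c : ℝ} (hn : Tendsto n atTop (𝓝 c)) :
    Tendsto (fun s => s * artanhLog (n s / s)) atTop (𝓝 c) := by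
  have hratio : Tendsto (fun s => n s / s) atTop (𝓝 0) := by
    simpa [div_eq_mul_inv] using hn.mul tendsto_inv_atTop_zero
  have hlower : Tendsto (fun s => n s / (1 + n s / s)) atTop (𝓝 c) := by
    simpa [Pi.div_def] using hn.div ((tendsto_const_nhds (x := (1 : ℝ))).add hratio) (by norm_num)
  have hupper : Tendsto (fun s => n s / (1 - n s / s)) atTop (𝓝 c) := by
    simpa [Pi.div_def] using hn.div ((tendsto_const_nhds (x := (1 : ℝ))).sub hratio) (by norm_num)
  have hbounds : ∀ᶠ s in atTop, 0 < s ∧ -1 < n s / s ∧ n s / s < 1 := by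
    filter_upwards [eventually_gt_atTop 0,
      hratio.eventually (Ioo_mem_nhds neg_one_lt_zero one_pos)] with s hs hu using ⟨hs, hu⟩
  refine tendsto_of_tendsto_of_tendsto_of_le_of_le' hlower hupper ?_ ?_ <;>
    filter_upwards [hbounds] with s ⟨hs, h₁, h₂⟩
  · have := mul_le_mul_of_nonneg_left (artanhLog_mem_Icc h₁ h₂).1 hs.le
    rwa [← mul_div_assoc, mul_div_cancel₀ _ hs.ne'] at this
  · have := mul_le_mul_of_nonneg_left (artanhLog_mem_Icc h₁ h₂).2 hs.le
    rwa [← mul_div_assoc, mul_div_cancel₀ _ hs.ne'] at this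

end Real

theorem tendsto_mobiusAdd_atTop {d : ℕ} (x y : EuclideanSpace ℝ (Fin d)) :
    Tendsto (fun s : ℝ => mobiusAdd s x y) atTop (𝓝 (x + y)) := by
  -- As a function of `t = 1/s²`, the Möbius sum is continuous at `t = 0`, where it is `x + y`.
  set F : ℝ → EuclideanSpace ℝ (Fin d) := fun t =>
    ((1 + 2 * t * inner ℝ x y + t * ‖y‖ ^ 2) /
        (1 + 2 * t * inner ℝ x y + t ^ 2 * ‖x‖ ^ 2 * ‖y‖ ^ 2)) • x +
      ((1 - t * ‖x‖ ^ 2) / (1 + 2 * t * inner ℝ x y + t ^ 2 * ‖x‖ ^ 2 * ‖y‖ ^ 2)) • y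
  have hF : ContinuousAt F 0 := by fun_prop (disch := norm_num)
  have hF0 : F 0 = x + y := by simp [F]
  have hmob : (fun s : ℝ => mobiusAdd s x y) = F ∘ fun s => (s ^ 2)⁻¹ := by
    funext s
    simp only [mobiusAdd, F, Function.comp_apply]
    congr 3 <;> ring
  rw [hmob, ← hF0]
  exact hF.tendsto.comp ((tendsto_pow_atTop two_ne_zero).inv_tendsto_atTop)

/-- `d_s(x, y) → 2‖x − y‖` as `s → ∞`. -/
theorem stmt15 {d : ℕ} (x y : EuclideanSpace ℝ (Fin d)) :
    Filter.Tendsto (fun s : ℝ => 2 * s * Real.artanhLog (‖mobiusAdd s (-x) y‖ / s))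
      Filter.atTop (nhds (2 * ‖x - y‖)) := by
  have hnorm : Tendsto (fun s : ℝ => ‖mobiusAdd s (-x) y‖) atTop (𝓝 ‖x - y‖) := by
    rw [← norm_neg (x - y), neg_sub, sub_eq_neg_add]
    exact (tendsto_mobiusAdd_atTop (-x) y).norm
  simpa only [mul_assoc] using (Real.tendsto_mul_artanhLog_div hnorm).const_mul 2
end

section
/- Let μ1, μ2, x ∈ ℝ^d with x ≠ μ1, and let T be a real d×d matrix with T(x − μ1) ≠ 0. Then the wrapped linear map μ2 ⊕_s T^{⊗_s}((−μ1) ⊕_s x) tends to μ2 + T(x − μ1) as s → ∞ (the expression being defined for all sufficiently large s). -/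
open Real MeasureTheory

/-!
As `s → ∞` all the curvature corrections in `x ⊕_s y` are `O(1/s²)`, so Möbius addition
tends to vector addition, jointly in both arguments. For Möbius matrix multiplication, write
`u = ‖y‖/s` and `A = (‖Py‖/‖y‖)·artanh u`; the scalar in front of `Py` is then
`(tanh A / A)·(artanh u / u)`, and both factors tend to `1` because `A, u → 0⁺` and `tanh`,
`artanh` have derivative `1` at `0`. The theorem follows by composing the two limits.
-/

open Filter Topology

theorem tendsto_div_self_of_hasDerivAt {f : ℝ → ℝ} {f' : ℝ} (hf : HasDerivAt f f' 0)
    (hf0 : f 0 = 0) : Tendsto (fun t => f t / t) (𝓝[≠] 0) (𝓝 f') := by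
  refine (hasDerivAt_iff_tendsto_slope.mp hf).congr fun t => ?_
  simp [slope_fun_def, hf0, div_eq_inv_mul]

namespace Real

theorem hasDerivAt_tanh (x : ℝ) : HasDerivAt tanh (cosh x ^ 2)⁻¹ x := by
  have hquot := (hasDerivAt_sinh x).div (hasDerivAt_cosh x) (cosh_pos x).ne'
  rw [show sinh / cosh = tanh from funext fun y => (tanh_eq_sinh_div_cosh y).symm] at hquot
  refine hquot.congr_deriv ?_
  rw [← sq, ← sq, cosh_sq_sub_sinh_sq, inv_eq_one_div]

theorem artanhLog_zero : artanhLog 0 = 0 := by simp [artanhLog]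

theorem hasDerivAt_artanhLog {x : ℝ} (hx : x ∈ Set.Ioo (-1) 1) :
    HasDerivAt artanhLog (1 - x ^ 2)⁻¹ x := by
  obtain ⟨hx₁, hx₂⟩ := hx
  have h₁ : 1 - x ≠ 0 := by linarith
  have h₂ : 1 + x ≠ 0 := by linarith
  have hquot : HasDerivAt (fun y : ℝ => (1 + y) / (1 - y)) (2 / (1 - x) ^ 2) x :=
    (((hasDerivAt_id x).const_add 1).div ((hasDerivAt_id x).const_sub 1) h₁).congr_deriv
      (by simp only [id]; ring)
  refine ((hquot.log (div_ne_zero h₂ h₁)).const_mul (1 / 2)).congr_deriv ?_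
  rw [show 1 - x ^ 2 = (1 - x) * (1 + x) by ring]
  field_simp

theorem tendsto_tanh_div_self : Tendsto (fun t => tanh t / t) (𝓝[≠] 0) (𝓝 1) := by
  simpa using tendsto_div_self_of_hasDerivAt (hasDerivAt_tanh 0) tanh_zero

theorem tendsto_artanhLog_div_self : Tendsto (fun t => artanhLog t / t) (𝓝[≠] 0) (𝓝 1) := by
  simpa using tendsto_div_self_of_hasDerivAt (hasDerivAt_artanhLog (by norm_num)) artanhLog_zero

end Real

theorem continuous_mulVecE {d d' : ℕ} (P : Matrix (Fin d') (Fin d) ℝ) :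
    Continuous (mulVecE P) := by
  unfold mulVecE; fun_prop

theorem tendsto_div_pow_mul_atTop {g : ℝ → ℝ} {l : ℝ} (c : ℝ) {n : ℕ} (hn : n ≠ 0)
    (hg : Tendsto g atTop (𝓝 l)) : Tendsto (fun s => c / s ^ n * g s) atTop (𝓝 0) := by
  simpa using (tendsto_const_nhds.div_atTop (tendsto_pow_atTop hn)).mul hg

theorem tendsto_mobiusAdd {d : ℕ} {a b : ℝ → EuclideanSpace ℝ (Fin d)}
    {a₀ b₀ : EuclideanSpace ℝ (Fin d)} (ha : Tendsto a atTop (𝓝 a₀))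
    (hb : Tendsto b atTop (𝓝 b₀)) :
    Tendsto (fun s => mobiusAdd s (a s) (b s)) atTop (𝓝 (a₀ + b₀)) := by
  have hinner := tendsto_div_pow_mul_atTop 2 two_ne_zero (ha.inner hb)
  have hden : Tendsto (fun s : ℝ => 1 + 2 / s ^ 2 * (inner ℝ (a s) (b s) : ℝ) +
      1 / s ^ 4 * ‖a s‖ ^ 2 * ‖b s‖ ^ 2) atTop (𝓝 1) := by
    simpa [mul_assoc] using (tendsto_const_nhds.add hinner).add
      (tendsto_div_pow_mul_atTop 1 four_ne_zero ((ha.norm.pow 2).mul (hb.norm.pow 2)))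
  have hcoeff_a : Tendsto (fun s : ℝ => 1 + 2 / s ^ 2 * (inner ℝ (a s) (b s) : ℝ) +
      1 / s ^ 2 * ‖b s‖ ^ 2) atTop (𝓝 1) := by
    simpa using (tendsto_const_nhds.add hinner).add
      (tendsto_div_pow_mul_atTop 1 two_ne_zero (hb.norm.pow 2))
  have hcoeff_b : Tendsto (fun s : ℝ => 1 - 1 / s ^ 2 * ‖a s‖ ^ 2) atTop (𝓝 1) := by
    simpa using tendsto_const_nhds.sub (tendsto_div_pow_mul_atTop 1 two_ne_zero (ha.norm.pow 2))
  simpa [mobiusAdd] using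
    ((hcoeff_a.div hden one_ne_zero).smul ha).add ((hcoeff_b.div hden one_ne_zero).smul hb)

theorem tendsto_tanh_mul_artanhLog_div {ι : Type*} {l : Filter ι} {k u : ι → ℝ} {k₀ : ℝ}
    (hk : Tendsto k l (𝓝 k₀)) (hk₀ : 0 < k₀) (hu : Tendsto u l (𝓝[>] 0)) :
    Tendsto (fun i => tanh (k i * artanhLog (u i)) / (k i * u i)) l (𝓝 1) := by
  have hk_pos : ∀ᶠ i in l, 0 < k i := hk.eventually (lt_mem_nhds hk₀)
  have hu_pos : ∀ᶠ i in l, 0 < u i := hu self_mem_nhdsWithin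
  have hartanh : Tendsto (fun i => artanhLog (u i) / u i) l (𝓝 1) :=
    tendsto_artanhLog_div_self.comp (hu.mono_right (nhdsGT_le_nhdsNE 0))
  have hartanh_pos : ∀ᶠ i in l, 0 < artanhLog (u i) := by
    filter_upwards [hu_pos, hartanh.eventually (lt_mem_nhds one_pos)] with i hui hratio
    simpa [div_mul_cancel₀ _ hui.ne'] using mul_pos hratio hui
  have hA : Tendsto (fun i => k i * artanhLog (u i)) l (𝓝[>] 0) := by
    have hlim := (hk.mul (hu.mono_right nhdsWithin_le_nhds)).mul hartanh
    rw [mul_zero, zero_mul] at hlim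
    refine tendsto_nhdsWithin_iff.2 ⟨hlim.congr' ?_, ?_⟩
    · filter_upwards [hu_pos] with i hui
      field_simp
    · filter_upwards [hk_pos, hartanh_pos] with i hki hai
      exact mul_pos hki hai
  have hprod :=
    (tendsto_tanh_div_self.comp (hA.mono_right (nhdsGT_le_nhdsNE 0))).mul hartanh
  rw [one_mul] at hprod
  refine hprod.congr' ?_
  filter_upwards [hk_pos, hu_pos, hartanh_pos] with i hki hui hai
  simp only [Function.comp_apply]
  field_simp

theorem tendsto_mobiusMat {d d' : ℕ} (P : Matrix (Fin d') (Fin d) ℝ)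
    {y : ℝ → EuclideanSpace ℝ (Fin d)} {y₀ : EuclideanSpace ℝ (Fin d)}
    (hy : Tendsto y atTop (𝓝 y₀)) (hy₀ : y₀ ≠ 0) (hPy₀ : mulVecE P y₀ ≠ 0) :
    Tendsto (fun s => mobiusMat s P (y s)) atTop (𝓝 (mulVecE P y₀)) := by
  have hPy : Tendsto (fun s => mulVecE P (y s)) atTop (𝓝 (mulVecE P y₀)) :=
    ((continuous_mulVecE P).tendsto y₀).comp hy
  have hy_pos : ∀ᶠ s in atTop, 0 < ‖y s‖ := hy.norm.eventually (lt_mem_nhds (norm_pos_iff.2 hy₀))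
  have hu : Tendsto (fun s => ‖y s‖ / s) atTop (𝓝[>] 0) := by
    refine tendsto_nhdsWithin_iff.2 ⟨hy.norm.div_atTop tendsto_id, ?_⟩
    filter_upwards [hy_pos, eventually_gt_atTop 0] with s hys hs
    exact div_pos hys hs
  have hscale := tendsto_tanh_mul_artanhLog_div (hPy.norm.div hy.norm (norm_ne_zero_iff.2 hy₀))
    (div_pos (norm_pos_iff.2 hPy₀) (norm_pos_iff.2 hy₀)) hu
  have hcoeff : Tendsto (fun s => s * tanh (‖mulVecE P (y s)‖ / ‖y s‖ *
      artanhLog (‖y s‖ / s)) / ‖mulVecE P (y s)‖) atTop (𝓝 1) := by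
    refine hscale.congr' ?_
    filter_upwards [hy_pos, eventually_gt_atTop 0] with s hys hs
    simp only [Pi.div_apply]
    field_simp
  simpa [mobiusMat] using hcoeff.smul hPy

/-- The wrapped linear map tends to the Euclidean affine map as `s → ∞`. -/
theorem stmt16 {d : ℕ} (μ1 μ2 x : EuclideanSpace ℝ (Fin d)) (T : Matrix (Fin d) (Fin d) ℝ)
    (hx : x ≠ μ1) (hTx : mulVecE T (x - μ1) ≠ 0) :
    Filter.Tendsto (fun s : ℝ => mobiusAdd s μ2 (mobiusMat s T (mobiusAdd s (-μ1) x)))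
      Filter.atTop (nhds (μ2 + mulVecE T (x - μ1))) := by
  have hshift : Tendsto (fun s => mobiusAdd s (-μ1) x) atTop (𝓝 (x - μ1)) := by
    simpa [neg_add_eq_sub] using
      tendsto_mobiusAdd (tendsto_const_nhds (x := -μ1)) (tendsto_const_nhds (x := x))
  exact tendsto_mobiusAdd tendsto_const_nhds (tendsto_mobiusMat T hshift (sub_ne_zero.2 hx) hTx)
end

section
/- Let s > 0 and let x, y ∈ B_s^d. Then the two expressions for the Poincaré distance agree: 2s·artanh(‖(−x) ⊕_s y‖/s) = 2s·arsinh(γ_x·γ_y·‖x − y‖/s), where γ_x = 1/√(1 − ‖x‖²/s²) and γ_y = 1/√(1 − ‖y‖²/s²). -/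
open Real MeasureTheory

/-!
Let `D` be the common denominator in `x ⊕ y`. Expanding the norm gives
`‖x ⊕ y‖² = ‖x + y‖² / D` and `1 - ‖x ⊕ y‖²/s² = (1 - ‖x‖²/s²)(1 - ‖y‖²/s²) / D`, so
`γ_{x ⊕ y} = γ_x γ_y √D` and the factors `√D` cancel in `γ_{x ⊕ y} ‖x ⊕ y‖ = γ_x γ_y ‖x + y‖`.
Since `artanh t = arsinh (t / √(1 - t²))`, taking `t = ‖(-x) ⊕ y‖ / s` turns the left-hand
side into `arsinh (γ_{(-x) ⊕ y} ‖(-x) ⊕ y‖ / s)`, which is the right-hand side.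
-/

theorem Real.artanhLog_eq_arsinh {t : ℝ} (ht : t ∈ Set.Ioo (-1) 1) :
    Real.artanhLog t = Real.arsinh (t / √(1 - t ^ 2)) := by
  rw [Real.artanhLog, ← Real.artanh_eq_half_log (Set.Ioo_subset_Icc_self ht),
    ← Real.sinh_artanh ht, Real.arsinh_sinh]

section LorentzGamma

variable {d : ℕ} {s : ℝ}

theorem lorentzGamma_neg (x : EuclideanSpace ℝ (Fin d)) :
    lorentzGamma s (-x) = lorentzGamma s x := by
  rw [lorentzGamma, lorentzGamma, norm_neg]

theorem one_sub_norm_sq_div_sq_pos {x : EuclideanSpace ℝ (Fin d)} (hx : ‖x‖ < s) :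
    0 < 1 - ‖x‖ ^ 2 / s ^ 2 := by
  have hs : 0 < s := (norm_nonneg x).trans_lt hx
  rw [sub_pos, div_lt_one (by positivity)]
  exact pow_lt_pow_left₀ hx (norm_nonneg x) two_ne_zero

theorem Real.artanhLog_norm_div_eq_arsinh {z : EuclideanSpace ℝ (Fin d)} (hz : ‖z‖ < s) :
    Real.artanhLog (‖z‖ / s) = Real.arsinh (lorentzGamma s z * ‖z‖ / s) := by
  have hs : 0 < s := (norm_nonneg z).trans_lt hz
  have ht : ‖z‖ / s ∈ Set.Ioo (-1) 1 :=
    ⟨by linarith [div_nonneg (norm_nonneg z) hs.le], (div_lt_one hs).2 hz⟩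
  rw [Real.artanhLog_eq_arsinh ht, lorentzGamma, div_pow]
  congr 1
  ring

end LorentzGamma

section MobiusAddition

variable {d : ℕ} (s : ℝ) (x y : EuclideanSpace ℝ (Fin d))

/-- The common denominator of the two coefficients in `mobiusAdd s x y`. -/
noncomputable def mobiusDenom : ℝ :=
  1 + 2 / s ^ 2 * (inner ℝ x y : ℝ) + 1 / s ^ 4 * ‖x‖ ^ 2 * ‖y‖ ^ 2

theorem norm_mobiusAdd_sq : ‖mobiusAdd s x y‖ ^ 2 = ‖x + y‖ ^ 2 / mobiusDenom s x y := by
  set u : ℝ := 1 / s ^ 2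
  set D := mobiusDenom s x y with hD_def
  have hD : D = 1 + 2 * u * inner ℝ x y + u ^ 2 * ‖x‖ ^ 2 * ‖y‖ ^ 2 := by
    simp only [hD_def, mobiusDenom, u]; ring
  have hadd : mobiusAdd s x y =
      ((1 + 2 * u * inner ℝ x y + u * ‖y‖ ^ 2) / D) • x + ((1 - u * ‖x‖ ^ 2) / D) • y := by
    simp only [mobiusAdd, hD_def, mobiusDenom, u]; ring_nf
  rw [hadd, norm_add_sq_real, norm_add_sq_real, norm_smul, norm_smul, real_inner_smul_left,
    real_inner_smul_right]
  simp only [Real.norm_eq_abs, mul_pow, sq_abs]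
  -- The numerator is `D * ‖x + y‖²`, a polynomial identity in `u`.
  by_cases hD0 : D = 0
  · simp [hD0]
  · field_simp
    rw [hD]
    ring

variable {s x y}

theorem mobiusDenom_pos (h : ‖x‖ * ‖y‖ < s ^ 2) : 0 < mobiusDenom s x y := by
  have hs : 0 < s ^ 2 := (by positivity : 0 ≤ ‖x‖ * ‖y‖).trans_lt h
  have hs0 : s ≠ 0 := by rintro rfl; simp at hs
  have hinner : -(‖x‖ * ‖y‖) ≤ inner ℝ x y := neg_le_of_abs_le (abs_real_inner_le_norm x y)
  -- `s⁴ D ≥ (s² - ‖x‖‖y‖)²` by Cauchy–Schwarz.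
  have hscaled :
      s ^ 4 * mobiusDenom s x y = s ^ 4 + 2 * s ^ 2 * inner ℝ x y + (‖x‖ * ‖y‖) ^ 2 := by
    rw [mobiusDenom]; field_simp
  have : 0 < s ^ 4 * mobiusDenom s x y := by
    rw [hscaled]; nlinarith [pow_pos (sub_pos.2 h) 2]
  exact pos_of_mul_pos_right this (by positivity)

theorem mobiusDenom_pos_of_norm_lt (hx : ‖x‖ < s) (hy : ‖y‖ < s) : 0 < mobiusDenom s x y :=
  mobiusDenom_pos (by nlinarith [norm_nonneg x, norm_nonneg y])

theorem one_sub_norm_mobiusAdd_sq_div (hD : mobiusDenom s x y ≠ 0) :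
    1 - ‖mobiusAdd s x y‖ ^ 2 / s ^ 2 =
      (1 - ‖x‖ ^ 2 / s ^ 2) * (1 - ‖y‖ ^ 2 / s ^ 2) / mobiusDenom s x y := by
  rw [norm_mobiusAdd_sq, norm_add_sq_real]
  rcases eq_or_ne s 0 with rfl | hs
  · simp [mobiusDenom]
  · field_simp
    rw [mobiusDenom]
    field_simp
    ring

theorem norm_mobiusAdd_lt (hx : ‖x‖ < s) (hy : ‖y‖ < s) : ‖mobiusAdd s x y‖ < s := by
  have hs : 0 < s := (norm_nonneg x).trans_lt hx
  have hpos : 0 < 1 - ‖mobiusAdd s x y‖ ^ 2 / s ^ 2 := by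
    rw [one_sub_norm_mobiusAdd_sq_div (mobiusDenom_pos_of_norm_lt hx hy).ne']
    have := one_sub_norm_sq_div_sq_pos hx
    have := one_sub_norm_sq_div_sq_pos hy
    have := mobiusDenom_pos_of_norm_lt hx hy
    positivity
  rw [sub_pos, div_lt_one (by positivity)] at hpos
  exact (pow_lt_pow_iff_left₀ (norm_nonneg _) hs.le two_ne_zero).1 hpos

theorem lorentzGamma_mobiusAdd (hx : ‖x‖ < s) (hy : ‖y‖ < s) :
    lorentzGamma s (mobiusAdd s x y) =
      lorentzGamma s x * lorentzGamma s y * √(mobiusDenom s x y) := by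
  have hD := mobiusDenom_pos_of_norm_lt hx hy
  have hx' := one_sub_norm_sq_div_sq_pos hx
  have hy' := one_sub_norm_sq_div_sq_pos hy
  rw [lorentzGamma, one_sub_norm_mobiusAdd_sq_div hD.ne', Real.sqrt_div' _ hD.le,
    Real.sqrt_mul hx'.le, lorentzGamma, lorentzGamma]
  field_simp

theorem norm_mobiusAdd (hD : 0 ≤ mobiusDenom s x y) :
    ‖mobiusAdd s x y‖ = ‖x + y‖ / √(mobiusDenom s x y) := by
  rw [← Real.sqrt_sq (norm_nonneg (mobiusAdd s x y)), norm_mobiusAdd_sq, Real.sqrt_div' _ hD,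
    Real.sqrt_sq (norm_nonneg _)]

theorem lorentzGamma_mobiusAdd_mul_norm (hx : ‖x‖ < s) (hy : ‖y‖ < s) :
    lorentzGamma s (mobiusAdd s x y) * ‖mobiusAdd s x y‖ =
      lorentzGamma s x * lorentzGamma s y * ‖x + y‖ := by
  have hD := mobiusDenom_pos_of_norm_lt hx hy
  rw [lorentzGamma_mobiusAdd hx hy, norm_mobiusAdd hD.le]
  field_simp

end MobiusAddition

theorem stmt18_general {d : ℕ} (s : ℝ) (x y : EuclideanSpace ℝ (Fin d))
    (hx : ‖x‖ < s) (hy : ‖y‖ < s) :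
    2 * s * Real.artanhLog (‖mobiusAdd s (-x) y‖ / s) =
      2 * s * Real.arsinh (lorentzGamma s x * lorentzGamma s y * ‖x - y‖ / s) := by
  have hx' : ‖-x‖ < s := by rwa [norm_neg]
  rw [Real.artanhLog_norm_div_eq_arsinh (norm_mobiusAdd_lt hx' hy),
    lorentzGamma_mobiusAdd_mul_norm hx' hy, lorentzGamma_neg, neg_add_eq_sub, norm_sub_rev]

/-- The two expressions of the Poincaré distance agree on the ball of radius `s`. -/
theorem stmt18 {d : ℕ} (s : ℝ) (hs : 0 < s) (x y : EuclideanSpace ℝ (Fin d))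
    (hx : ‖x‖ < s) (hy : ‖y‖ < s) :
    2 * s * Real.artanhLog (‖mobiusAdd s (-x) y‖ / s) =
      2 * s * Real.arsinh (lorentzGamma s x * lorentzGamma s y * ‖x - y‖ / s) :=
  stmt18_general s x y hx hy
end
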